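/- arXiv:2503.02809 — 4 statements merged into one kernel-verified Lean document; each statement's English description precedes it below -/
import Mathlib

section
/- Let η ∈ [2/λ₁, 0.1]. Let θ = (α, 0, β₂) ∈ ℝ³ satisfy 1/√(λ₁η) ≤ α ≤ √(2/(λ₁η)) and 0 < αβ₂ < 1. Then the vector (0,1,0) is an eigenvector of H(θ) with eigenvalue λ₁α², this eigenvalue is the largest eigenvalue of H(θ) (so S(θ) = λ₁α² ≤ 2/η), and the gradient ∇L(θ) is orthogonal to (0,1,0). -/
/-!
At `β₁ = 0` the Hessian decouples: `(0, 1, 0)` is an eigenvector with eigenvalue `λ₁α²`, which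
the bounds on `α` place in `[1/η, 2/η]`, so it is at least `10`. Every other eigenvalue belongs
to the symmetric `2 × 2` block on the coordinates `α, β₂`, and is therefore at most its largest
diagonal entry plus the modulus of its off-diagonal entry; the constraints `λ₁λ₂ ≤ 1`,
`0 < αβ₂ < 1` and `η ≤ 0.1` make both of size well below `1`.
-/

noncomputable section

open Matrix

/-- Clip(x, c) = sign(x) * max {|x|, c}. -/
def Clip (x c : ℝ) : ℝ := Real.sign x * max |x| c

/-- Hessian of the loss at θ = (a, b1, b2). -/
def Hmat (l1 l2 a b1 b2 : ℝ) : Matrix (Fin 3) (Fin 3) ℝ :=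
  !![l1 * b1 ^ 2 + l2 * b2 ^ 2, 2 * l1 * a * b1, 2 * l2 * a * b2 - l2;
     2 * l1 * a * b1, l1 * a ^ 2, 0;
     2 * l2 * a * b2 - l2, 0, l2 * a ^ 2]

/-- Sharpness: the largest eigenvalue of a (symmetric) 3×3 real matrix. -/
def sharpness (M : Matrix (Fin 3) (Fin 3) ℝ) : ℝ :=
  sSup {mu : ℝ | ∃ v : Fin 3 → ℝ, v ≠ 0 ∧ M.mulVec v = mu • v}

/-- The loss L(a, b1, b2). -/
def Loss (l1 l2 a b1 b2 : ℝ) : ℝ :=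
  (1 / 2) * l1 * (a * b1) ^ 2 + (1 / 2) * l2 * (a * b2 - 1) ^ 2

/-- Membership in the initialization set X(η). -/
def InInit (l1 l2 eta a b1 b2 : ℝ) : Prop :=
  Real.sqrt (1.1 / (l1 * eta)) ≤ a ∧ a ≤ Real.sqrt (2 / (l1 * eta)) ∧
  max (max (Real.sqrt (6 * eta * l1) / 20) (3 / (20 * a))) a ≤ b2 ∧ b2 < 1 / a ∧
  (l2 * b2 / (500 * l1 * a)) * (1 - a * b2) ≤ b1 ^ 2 ∧
  b1 ^ 2 ≤ (l2 * b2 / (l1 * a)) * (1 - a * b2)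

/-- The clipped gradient descent trajectory equations. -/
def IsTraj (l1 l2 eta : ℝ) (a b1 b2 : ℕ → ℝ) : Prop :=
  ∀ t : ℕ,
    a (t + 1) = a t - eta * (l1 * (b1 t) ^ 2 * a t - l2 * b2 t * (1 - a t * b2 t)) ∧
    b1 (t + 1) = Clip ((1 - eta * l1 * (a t) ^ 2) * b1 t)
      (Real.sqrt 10 / (6 * Real.sqrt l1)) ∧
    b2 (t + 1) = b2 t + eta * l2 * a t * (1 - a t * b2 t)

/-- The projected (constrained) trajectory equations. -/
def IsProjTraj (l1 l2 eta : ℝ) (a b : ℕ → ℝ) : Prop :=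
  ∀ t : ℕ,
    a (t + 1) = Clip (a t + eta * l2 * b t * (1 - a t * b t))
      (Real.sqrt (2 / (eta * l1))) ∧
    b (t + 1) = b t + eta * l2 * a t * (1 - a t * b t)


theorem le_max_add_abs_of_symm_eigen {p q c μ x z : ℝ} (hxz : x ≠ 0 ∨ z ≠ 0)
    (hx : p * x + c * z = μ * x) (hz : c * x + q * z = μ * z) :
    μ ≤ max p q + |c| := by
  have hpos : 0 < x ^ 2 + z ^ 2 := by
    rcases hxz with h | h <;> positivity
  have hrayleigh : μ * (x ^ 2 + z ^ 2) = p * x ^ 2 + 2 * c * (x * z) + q * z ^ 2 := by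
    linear_combination (-x) * hx + (-z) * hz
  have hcross : 2 * c * (x * z) ≤ |c| * (x ^ 2 + z ^ 2) := by
    have := two_mul_le_add_sq |x| |z|
    rw [sq_abs, sq_abs] at this
    calc 2 * c * (x * z) ≤ |2 * c * (x * z)| := le_abs_self _
      _ = |c| * (2 * |x| * |z|) := by rw [abs_mul, abs_mul, abs_mul, abs_two]; ring
      _ ≤ |c| * (x ^ 2 + z ^ 2) := by gcongr
  refine le_of_mul_le_mul_right ?_ hpos
  nlinarith [le_max_left p q, le_max_right p q, sq_nonneg x, sq_nonneg z]

theorem Hmat_mulVec_basis_one (l1 l2 a b2 : ℝ) :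
    Hmat l1 l2 a 0 b2 *ᵥ ![0, 1, 0] = (l1 * a ^ 2) • ![0, 1, 0] := by
  ext i
  fin_cases i <;> simp [Hmat, mulVec, dotProduct, Fin.sum_univ_three]

theorem Hmat_eigenvalue_eq_or_le {l1 l2 a b2 μ : ℝ} {v : Fin 3 → ℝ} (hv : v ≠ 0)
    (h : Hmat l1 l2 a 0 b2 *ᵥ v = μ • v) :
    μ = l1 * a ^ 2 ∨ μ ≤ max (l2 * b2 ^ 2) (l2 * a ^ 2) + |2 * l2 * a * b2 - l2| := by
  have h0 := congrFun h 0
  have h1 := congrFun h 1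
  have h2 := congrFun h 2
  simp only [mulVec, dotProduct, Hmat, Fin.sum_univ_three, of_apply, cons_val', cons_val_fin_one,
    cons_val_zero, cons_val_one, cons_val, Pi.smul_apply, smul_eq_mul, mul_eq_mul_right_iff,
    ne_eq, OfNat.ofNat_ne_zero, not_false_eq_true, zero_pow, mul_zero, zero_mul, zero_add,
    add_zero] at h0 h1 h2
  rcases h1 with h1 | hv1
  · exact .inl h1.symm
  · refine .inr (le_max_add_abs_of_symm_eigen ?_ h0 h2)
    by_contra! hv02
    exact hv (by ext i; fin_cases i <;> simp [hv02.1, hv1, hv02.2])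

theorem Hmat_block_bound_le {l1 l2 eta a b2 : ℝ} (hl1 : 100 ≤ l1) (hl2 : 0 < l2)
    (hl : l1 * l2 ≤ 1) (heta : eta ≤ 0.1) (hk : 2 ≤ l1 * eta)
    (hlow : 1 ≤ l1 * eta * a ^ 2) (hhigh : l1 * eta * a ^ 2 ≤ 2)
    (hb1 : 0 < a * b2) (hb2 : a * b2 < 1) :
    max (l2 * b2 ^ 2) (l2 * a ^ 2) + |2 * l2 * a * b2 - l2| ≤ l1 * a ^ 2 := by
  have heta_pos : 0 < eta := by nlinarith
  have hl2_le : l2 ≤ 1 / 100 := by nlinarith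
  have hoff : |2 * l2 * a * b2 - l2| ≤ l2 := abs_le.2 ⟨by nlinarith, by nlinarith⟩
  have hdiag_b2 : l2 * b2 ^ 2 ≤ eta := calc
    l2 * b2 ^ 2 ≤ l2 * b2 ^ 2 * (l1 * eta * a ^ 2) := le_mul_of_one_le_right (by positivity) hlow
    _ = (l1 * l2) * eta * (a * b2) ^ 2 := by ring
    _ ≤ 1 * eta * 1 ^ 2 := by gcongr
    _ = eta := by ring
  have hdiag_a : l2 * a ^ 2 ≤ l2 := mul_le_of_le_one_right hl2.le (by nlinarith)
  have hlarge : 10 ≤ l1 * a ^ 2 := by nlinarith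
  have := max_le heta (hl2_le.trans (by norm_num) : l2 ≤ 0.1)
  linarith [max_le_max hdiag_b2 hdiag_a]

theorem stable_set_properties (l1 l2 eta a b2 : ℝ)
    (hl1 : 100 ≤ l1) (hl2 : 0 < l2) (hl : l1 * l2 ≤ 1)
    (heta1 : 2 / l1 ≤ eta) (heta2 : eta ≤ 0.1)
    (ha1 : 1 / Real.sqrt (l1 * eta) ≤ a) (ha2 : a ≤ Real.sqrt (2 / (l1 * eta)))
    (hb1 : 0 < a * b2) (hb2 : a * b2 < 1) :
    (Hmat l1 l2 a 0 b2).mulVec ![0, 1, 0] = (l1 * a ^ 2) • ![0, 1, 0] ∧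
    sharpness (Hmat l1 l2 a 0 b2) = l1 * a ^ 2 ∧
    l1 * a ^ 2 ≤ 2 / eta ∧
    dotProduct
      ![l1 * a * 0 ^ 2 + l2 * b2 * (a * b2 - 1), l1 * a ^ 2 * 0,
        l2 * a * (a * b2 - 1)] ![0, 1, 0] = 0 := by
  have hl1_pos : 0 < l1 := by linarith
  have heta : 0 < eta := (by positivity : (0 : ℝ) < 2 / l1).trans_le heta1
  have hk : 2 ≤ l1 * eta := (div_le_iff₀' hl1_pos).1 heta1
  obtain ⟨ha, hlow⟩ : 0 ≤ a ∧ (l1 * eta)⁻¹ ≤ a ^ 2 := by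
    rwa [one_div, ← Real.sqrt_inv, Real.sqrt_le_iff] at ha1
  have hhigh : a ^ 2 ≤ 2 / (l1 * eta) := (Real.le_sqrt ha (by positivity)).1 ha2
  rw [inv_le_iff_one_le_mul₀' (by positivity)] at hlow
  rw [le_div_iff₀' (by positivity)] at hhigh
  have hsharp_le : l1 * a ^ 2 ≤ 2 / eta := by
    rw [le_div_iff₀' heta]; linarith
  have hblock := Hmat_block_bound_le hl1 hl2 hl heta2 hk hlow hhigh hb1 hb2
  refine ⟨Hmat_mulVec_basis_one l1 l2 a b2, IsGreatest.csSup_eq ⟨?_, ?_⟩, hsharp_le, ?_⟩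
  · exact ⟨![0, 1, 0], Function.ne_iff.2 ⟨1, by simp⟩, Hmat_mulVec_basis_one l1 l2 a b2⟩
  · rintro μ ⟨v, hv, h⟩
    exact (Hmat_eigenvalue_eq_or_le hv h).elim le_of_eq (·.trans hblock)
  · simp [dotProduct, Fin.sum_univ_three]
end
end

section
/- Define the set Y ⊂ ℝ³ of points (α, β₁, β₂) satisfying 2√5/√λ₁ ≤ α < 1, max{α, √3/(10α)} ≤ β₂ < 1/α, and λ₂β₂/(500λ₁α) ≤ β₁²/(1−αβ₂) ≤ λ₂β₂/(λ₁α). Then for every θ ∈ Y there exists a learning rate η ≤ 0.1 such that for every r ∈ [0.55, 1], θ ∈ X(rη). -/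
noncomputable section

open Matrix

theorem initialization_learning_rate_range (l1 l2 : ℝ)
    (hl1 : 100 ≤ l1) (hl2 : 0 < l2) (hl : l1 * l2 ≤ 1) :
    ∀ a b1 b2 : ℝ,
      2 * Real.sqrt 5 / Real.sqrt l1 ≤ a → a < 1 →
      max a (Real.sqrt 3 / (10 * a)) ≤ b2 → b2 < 1 / a →
      l2 * b2 / (500 * l1 * a) ≤ b1 ^ 2 / (1 - a * b2) →
      b1 ^ 2 / (1 - a * b2) ≤ l2 * b2 / (l1 * a) →
      ∃ eta : ℝ, 0 < eta ∧ eta ≤ 0.1 ∧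
        ∀ r : ℝ, 0.55 ≤ r → r ≤ 1 → InInit l1 l2 (r * eta) a b1 b2 := by
  intro a b1 b2 haA haB hb2max hb2lt hblo hbhi
  have hl1pos : (0:ℝ) < l1 := by linarith
  have ha : 0 < a := lt_of_lt_of_le (by positivity) haA
  have hsq : (2 * Real.sqrt 5 / Real.sqrt l1) ^ 2 = 20 / l1 := by
    rw [div_pow, mul_pow, Real.sq_sqrt (by norm_num : (5:ℝ) ≥ 0),
      Real.sq_sqrt hl1pos.le]
    norm_num
  have ha20 : 20 ≤ l1 * a ^ 2 := by
    have h := pow_le_pow_left₀ (by positivity) haA 2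
    rw [hsq, div_le_iff₀ hl1pos] at h
    nlinarith
  have hab : a * b2 < 1 := by
    have := mul_lt_mul_of_pos_left hb2lt ha
    rwa [mul_one_div, div_self ha.ne'] at this
  have h1ab : 0 < 1 - a * b2 := by linarith
  have hb2a : a ≤ b2 := le_trans (le_max_left _ _) hb2max
  have hb2s : Real.sqrt 3 / (10 * a) ≤ b2 := le_trans (le_max_right _ _) hb2max
  have hs3 : (1.7:ℝ) ≤ Real.sqrt 3 := by
    nlinarith [Real.sq_sqrt (by norm_num : (3:ℝ) ≥ 0), Real.sqrt_nonneg 3]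
  refine ⟨2 / (l1 * a ^ 2), by positivity, ?_, ?_⟩
  · rw [div_le_iff₀ (by positivity)]
    nlinarith
  intro r hr1 hr2
  have hrpos : (0:ℝ) < r := by linarith
  refine ⟨?_, ?_, ?_, hb2lt, (le_div_iff₀ h1ab).mp hblo, (div_le_iff₀ h1ab).mp hbhi⟩
  · calc Real.sqrt (1.1 / (l1 * (r * (2 / (l1 * a ^ 2)))))
        ≤ Real.sqrt (a ^ 2) := by
          apply Real.sqrt_le_sqrt
          rw [div_le_iff₀ (by positivity)]
          have : a ^ 2 * (l1 * (r * (2 / (l1 * a ^ 2)))) = 2 * r := by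
            field_simp
          rw [this]; linarith
      _ = a := Real.sqrt_sq ha.le
  · calc a = Real.sqrt (a ^ 2) := (Real.sqrt_sq ha.le).symm
      _ ≤ Real.sqrt (2 / (l1 * (r * (2 / (l1 * a ^ 2))))) := by
          apply Real.sqrt_le_sqrt
          rw [le_div_iff₀ (by positivity)]
          have : a ^ 2 * (l1 * (r * (2 / (l1 * a ^ 2)))) = 2 * r := by
            field_simp
          rw [this]; linarith
  · rw [max_le_iff, max_le_iff]
    refine ⟨⟨?_, ?_⟩, hb2a⟩
    · have h12 : 6 * (r * (2 / (l1 * a ^ 2))) * l1 ≤ 12 / a ^ 2 := by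
        have he : 6 * (r * (2 / (l1 * a ^ 2))) * l1 = 12 * r / a ^ 2 := by
          field_simp; ring
        rw [he]
        gcongr
        linarith
      have hs : Real.sqrt (12 / a ^ 2) = 2 * Real.sqrt 3 / a := by
        rw [show (12:ℝ) / a ^ 2 = (2 * Real.sqrt 3 / a) ^ 2 by
          rw [div_pow, mul_pow, Real.sq_sqrt (by norm_num : (3:ℝ) ≥ 0)]
          norm_num]
        exact Real.sqrt_sq (by positivity)
      calc Real.sqrt (6 * (r * (2 / (l1 * a ^ 2))) * l1) / 20
          ≤ Real.sqrt (12 / a ^ 2) / 20 := by have := Real.sqrt_le_sqrt h12; linarith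
        _ = Real.sqrt 3 / (10 * a) := by rw [hs]; ring
        _ ≤ b2 := hb2s
    · refine le_trans ?_ hb2s
      rw [div_le_div_iff₀ (by positivity) (by positivity)]
      nlinarith
end
end

section
/- Let θ = (α, 0, β₂) ∈ ℝ³ with α > 0 and αβ₂ = 1 (a global minimizer of L). Then the largest eigenvalue of H(θ) equals max{λ₁α², λ₂α² + λ₂β₂²}. -/
noncomputable section

open Matrix

theorem Matrix.exists_mulVec_eq_smul_iff_det_sub_eq_zero {n A : Type*} [Fintype n]
    [DecidableEq n] [CommRing A] [IsDomain A] (M : Matrix n n A) (μ : A) :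
    (∃ v, v ≠ 0 ∧ M *ᵥ v = μ • v) ↔ (M - μ • 1).det = 0 := by
  rw [← Matrix.exists_mulVec_eq_zero_iff]
  simp only [Matrix.sub_mulVec, Matrix.smul_mulVec, Matrix.one_mulVec, sub_eq_zero]

theorem csSup_insert_pair {α : Type*} [ConditionallyCompleteLinearOrder α] (a b c : α) :
    sSup {a, b, c} = max a (max b c) := by
  rw [csSup_insert (Set.toFinite _).bddAbove (Set.insert_nonempty _ _), csSup_pair]

/-- At a minimizer the `(α, β₂)` block of the Hessian is `λ₂ (β₂, α)ᵀ(β₂, α)`, of rank one. -/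
theorem det_Hmat_sub_smul_one {l1 l2 a b2 : ℝ} (hab : a * b2 = 1) (μ : ℝ) :
    (Hmat l1 l2 a 0 b2 - μ • 1).det =
      -(μ * (μ - l1 * a ^ 2) * (μ - (l2 * a ^ 2 + l2 * b2 ^ 2))) := by
  simp only [Hmat, Matrix.one_fin_three, Matrix.det_fin_three, Matrix.sub_apply,
    Matrix.smul_apply, Matrix.of_apply, Matrix.cons_val_zero,
    Matrix.cons_val_one, Matrix.cons_val, smul_eq_mul]
  linear_combination (l2 ^ 2 * (l1 * a ^ 2 - μ) * (1 - 3 * a * b2)) * hab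

theorem setOf_exists_mulVec_Hmat_eq_smul {l1 l2 a b2 : ℝ} (hab : a * b2 = 1) :
    {μ : ℝ | ∃ v : Fin 3 → ℝ, v ≠ 0 ∧ Hmat l1 l2 a 0 b2 *ᵥ v = μ • v} =
      {0, l1 * a ^ 2, l2 * a ^ 2 + l2 * b2 ^ 2} := by
  ext μ
  simp only [Set.mem_ofPred_eq, Matrix.exists_mulVec_eq_smul_iff_det_sub_eq_zero,
    det_Hmat_sub_smul_one hab, neg_eq_zero, mul_eq_zero, sub_eq_zero, or_assoc,
    Set.mem_insert_iff, Set.mem_singleton_iff]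

theorem minimizer_sharpness_eq_max_general (l1 l2 a b2 : ℝ)
    (hl2 : 0 < l2)
    (hab : a * b2 = 1) :
    sharpness (Hmat l1 l2 a 0 b2) = max (l1 * a ^ 2) (l2 * a ^ 2 + l2 * b2 ^ 2) := by
  rw [sharpness, setOf_exists_mulVec_Hmat_eq_smul hab, csSup_insert_pair]
  exact max_eq_right (le_max_of_le_right (by positivity))

theorem minimizer_sharpness_eq_max (l1 l2 a b2 : ℝ)
    (hl1 : 100 ≤ l1) (hl2 : 0 < l2) (hl : l1 * l2 ≤ 1)
    (ha : 0 < a) (hab : a * b2 = 1) :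
    sharpness (Hmat l1 l2 a 0 b2) = max (l1 * a ^ 2) (l2 * a ^ 2 + l2 * b2 ^ 2) :=
  minimizer_sharpness_eq_max_general l1 l2 a b2 hl2 hab
end
end

section
/- Let θ = (α, 0, β₂) ∈ ℝ³ with α > 0 and αβ₂ = 1, and assume λ₁ > λ₂. Then the following are equivalent: (a) S(θ) = λ₁α²; (b) λ₁α² ≥ λ₂α² + λ₂β₂²; (c) α⁴ ≥ λ₂/(λ₁ − λ₂); (d) α² − β₂² ≥ √(λ₂/(λ₁−λ₂)) − √((λ₁−λ₂)/λ₂). -/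
noncomputable section

open Matrix

lemma aux_det (l1 l2 a b2 mu : ℝ) (hab : a * b2 = 1) :
    (Hmat l1 l2 a 0 b2 - mu • 1).det = (l1*a^2 - mu) * (mu * (mu - (l2*a^2+l2*b2^2))) := by
  simp [Hmat, Matrix.det_fin_three, Matrix.sub_apply, Matrix.smul_apply, Matrix.one_apply]
  linear_combination (-(l2^2) * (3*(a*b2) - 1) * (l1*a^2 - mu)) * hab

lemma aux_set (l1 l2 a b2 : ℝ) (hab : a * b2 = 1) :
    {mu : ℝ | ∃ v : Fin 3 → ℝ, v ≠ 0 ∧ (Hmat l1 l2 a 0 b2).mulVec v = mu • v}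
      = {l1 * a ^ 2, 0, l2 * a ^ 2 + l2 * b2 ^ 2} := by
  have hab2 : a^2 * b2^2 = 1 := by nlinarith
  ext mu
  constructor
  · rintro ⟨v, hv, heq⟩
    have h0 : (Hmat l1 l2 a 0 b2 - mu • 1).mulVec v = 0 := by
      rw [Matrix.sub_mulVec, Matrix.smul_mulVec, Matrix.one_mulVec, heq, sub_self]
    have hdet : (Hmat l1 l2 a 0 b2 - mu • 1).det = 0 :=
      (Matrix.exists_mulVec_eq_zero_iff).mp ⟨v, hv, h0⟩
    rw [aux_det l1 l2 a b2 mu hab] at hdet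
    rcases mul_eq_zero.mp hdet with h | h
    · left; linarith [sub_eq_zero.mp h]
    · rcases mul_eq_zero.mp h with h' | h'
      · right; left; exact h'
      · right; right; have := sub_eq_zero.mp h'; simp [this]
  · intro hmu
    rcases hmu with h | h | h
    · refine ⟨![0,1,0], ?_, ?_⟩
      · intro hc; simpa using congrFun hc 1
      · rw [h]; funext i
        fin_cases i <;>
          simp [Hmat, Matrix.mulVec, dotProduct, Fin.sum_univ_three]
    · refine ⟨![a^2,0,-1], ?_, ?_⟩
      · intro hc; simpa using congrFun hc 2
      · rw [h]; funext i
        fin_cases i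
        · simp [Hmat, Matrix.mulVec, dotProduct, Fin.sum_univ_three]
          linear_combination l2*hab2 - 2*l2*hab
        · simp [Hmat, Matrix.mulVec, dotProduct, Fin.sum_univ_three]
        · simp [Hmat, Matrix.mulVec, dotProduct, Fin.sum_univ_three]
          linear_combination (2*l2*a^2)*hab
    · refine ⟨![1,0,a^2], ?_, ?_⟩
      · intro hc; simpa using congrFun hc 0
      · rw [Set.mem_singleton_iff.mp h]; funext i
        fin_cases i
        · simp [Hmat, Matrix.mulVec, dotProduct, Fin.sum_univ_three]
          linear_combination (2*l2*a^2)*hab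
        · simp [Hmat, Matrix.mulVec, dotProduct, Fin.sum_univ_three]
        · simp [Hmat, Matrix.mulVec, dotProduct, Fin.sum_univ_three]
          linear_combination (-l2)*hab2 + (2*l2)*hab

lemma aux_sharp (l1 l2 a b2 : ℝ) (hl2 : 0 < l2) (ha : 0 < a) (hab : a * b2 = 1) :
    sharpness (Hmat l1 l2 a 0 b2) = (l1 * a ^ 2) ⊔ (l2 * a ^ 2 + l2 * b2 ^ 2) := by
  have hK : (0:ℝ) ≤ l2 * a ^ 2 + l2 * b2 ^ 2 := by positivity
  rw [sharpness, aux_set l1 l2 a b2 hab]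
  have h1 : ({l1 * a ^ 2, 0, l2 * a ^ 2 + l2 * b2 ^ 2} : Set ℝ)
      = insert (l1 * a ^ 2) (insert 0 {l2 * a ^ 2 + l2 * b2 ^ 2}) := rfl
  rw [h1, csSup_insert, csSup_insert, csSup_singleton]
  · rw [sup_eq_right.mpr hK]
  · exact bddAbove_singleton
  · exact Set.singleton_nonempty _
  · exact ((Set.finite_singleton _).insert _).bddAbove
  · exact Set.insert_nonempty _ _

theorem minimizer_sharpness_characterization (l1 l2 a b2 : ℝ)
    (hl1 : 100 ≤ l1) (hl2 : 0 < l2) (hl : l1 * l2 ≤ 1) (hll : l2 < l1)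
    (ha : 0 < a) (hab : a * b2 = 1) :
    (sharpness (Hmat l1 l2 a 0 b2) = l1 * a ^ 2 ↔
      l2 * a ^ 2 + l2 * b2 ^ 2 ≤ l1 * a ^ 2) ∧
    (sharpness (Hmat l1 l2 a 0 b2) = l1 * a ^ 2 ↔
      l2 / (l1 - l2) ≤ a ^ 4) ∧
    (sharpness (Hmat l1 l2 a 0 b2) = l1 * a ^ 2 ↔
      Real.sqrt (l2 / (l1 - l2)) - Real.sqrt ((l1 - l2) / l2) ≤ a ^ 2 - b2 ^ 2) := by
  have hd : 0 < l1 - l2 := by linarith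
  have hab2 : a^2 * b2^2 = 1 := by nlinarith
  have h1 : sharpness (Hmat l1 l2 a 0 b2) = l1 * a ^ 2 ↔
      l2 * a ^ 2 + l2 * b2 ^ 2 ≤ l1 * a ^ 2 := by
    rw [aux_sharp l1 l2 a b2 hl2 ha hab]; exact sup_eq_left
  have h2 : l2 * a ^ 2 + l2 * b2 ^ 2 ≤ l1 * a ^ 2 ↔ l2 / (l1 - l2) ≤ a ^ 4 := by
    rw [div_le_iff₀ hd]
    constructor
    · intro h
      nlinarith [mul_nonneg (sq_nonneg a) (sub_nonneg.mpr h)]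
    · intro h
      nlinarith [mul_pos ha ha]
  -- part (d)
  set s := Real.sqrt (l2 / (l1 - l2)) with hs_def
  set s' := Real.sqrt ((l1 - l2) / l2) with hs'_def
  have hsd : 0 < l2 / (l1 - l2) := div_pos hl2 hd
  have hs_pos : 0 < s := Real.sqrt_pos.mpr hsd
  have hs'_pos : 0 < s' := Real.sqrt_pos.mpr (div_pos hd hl2)
  have hs2 : s ^ 2 = l2 / (l1 - l2) := Real.sq_sqrt hsd.le
  have hss' : s * s' = 1 := by
    rw [hs_def, hs'_def, ← Real.sqrt_mul hsd.le]
    rw [show l2 / (l1 - l2) * ((l1 - l2) / l2) = 1 by field_simp]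
    exact Real.sqrt_one
  have h3 : l2 / (l1 - l2) ≤ a ^ 4 ↔ s ≤ a ^ 2 := by
    rw [← hs2]
    constructor
    · intro h; nlinarith [mul_pos ha ha]
    · intro h; nlinarith [mul_pos ha ha]
  have h4 : s ≤ a ^ 2 ↔ s - s' ≤ a ^ 2 - b2 ^ 2 := by
    have hpos : (0:ℝ) < 1 + s' * b2 ^ 2 := by positivity
    constructor
    · intro h
      nlinarith [mul_nonneg (sub_nonneg.mpr h) hpos.le, hss', hab2]
    · intro h
      by_contra hc
      push_neg at hc
      nlinarith [mul_pos (sub_pos.mpr hc) hpos, hss', hab2]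
  exact ⟨h1, h1.trans h2, h1.trans (h2.trans (h3.trans h4))⟩
end
end
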